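/- Let b ≥ 0, 0 < m ≤ M, n > 2^b, and for 0 ≤ j ≤ 2^b set p_j = m^{(2^b+1−j)/(2^b+1)} · M^{j/(2^b+1)} (so p_0 = m). For 1 ≤ i ≤ 2^b with i ≤ n − 1, let σ^{(i)} be the price sequence of length n with σ^{(i)}(k) = p_{k+1} for 0 ≤ k ≤ i−1 and σ^{(i)}(k) = m for i ≤ k ≤ n−1. If a deterministic online search strategy A satisfies A([p_1, …, p_i]) = false (it rejects the i-th price on this sequence), then profit(A, σ^{(i)}) ≤ p_{i−1}, and consequently max_k σ^{(i)}(k) ≥ (M/m)^{1/(2^b+1)} · profit(A, σ^{(i)}). -/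
import Mathlib


/-- The maximum price of a price sequence of positive length. -/
noncomputable def maxPrice {n : ℕ} (hn : 0 < n) (σ : Fin n → ℝ) : ℝ :=
  Finset.univ.sup' ⟨⟨0, hn⟩, Finset.mem_univ _⟩ σ

/-- The profit of a deterministic online search strategy `A : List ℝ → Bool`
on the price sequence `σ`: it accepts at the least index `k` such that `A`
applied to the prefix `[σ 0, …, σ k]` is `true`, obtaining `σ k`; if no such
index exists it must accept the last price `σ (n-1)`. -/
noncomputable def osProfit {n : ℕ} (hn : 0 < n) (A : List ℝ → Bool) (σ : Fin n → ℝ) : ℝ :=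
  if h : ∃ k : Fin n, A ((List.ofFn σ).take ((k : ℕ) + 1)) = true then
    σ ((Finset.univ.filter (fun k : Fin n => A ((List.ofFn σ).take ((k : ℕ) + 1)) = true)).min'
      (h.imp fun k hk => Finset.mem_filter.mpr ⟨Finset.mem_univ _, hk⟩))
  else σ ⟨n - 1, Nat.sub_lt hn one_pos⟩

/-- (First case of the lower-bound proof.) With
`p_j = m^{(2^b+1-j)/(2^b+1)} M^{j/(2^b+1)}` (so `p_0 = m`) and `σ⁽ⁱ⁾` the
length-`n` sequence `p_1, …, p_i, m, …, m`, if a deterministic strategy `A`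
rejects the `i`-th price on this sequence (i.e. `A [p_1, …, p_i] = false`),
then its profit on `σ⁽ⁱ⁾` is at most `p_{i-1}`, and consequently its competitive
ratio on `σ⁽ⁱ⁾` is at least `(M/m)^{1/(2^b+1)}`. -/
theorem lower_bound_case_rejected_request
    (b : ℕ) (m M : ℝ) (hm : 0 < m) (hmM : m ≤ M)
    (n : ℕ) (hn : 0 < n) (hbn : 2 ^ b < n)
    (p : ℕ → ℝ)
    (hp : ∀ j : ℕ, j ≤ 2 ^ b →
      p j = m ^ ((2 ^ b + 1 - (j : ℝ)) / (2 ^ b + 1)) * M ^ ((j : ℝ) / (2 ^ b + 1)))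
    (i : ℕ) (hi1 : 1 ≤ i) (hi2 : i ≤ 2 ^ b) (hin : i ≤ n - 1)
    (σ : Fin n → ℝ) (hσ : ∀ k : Fin n, σ k = if (k : ℕ) < i then p ((k : ℕ) + 1) else m)
    (A : List ℝ → Bool)
    (hA : A (List.ofFn fun t : Fin i => p ((t : ℕ) + 1)) = false) :
    osProfit hn A σ ≤ p (i - 1) ∧
      (M / m) ^ ((1 : ℝ) / (2 ^ b + 1)) * osProfit hn A σ ≤ maxPrice hn σ := by
  have hM : 0 < M := lt_of_lt_of_le hm hmM
  have hMm : (0:ℝ) < M / m := div_pos hM hm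
  have hMm1 : (1:ℝ) ≤ M / m := (one_le_div hm).mpr hmM
  set c : ℝ := 2 ^ b + 1 with hc_def
  have hc : (0:ℝ) < c := by positivity
  -- closed form
  have key : ∀ j : ℕ, j ≤ 2 ^ b → p j = m * (M / m) ^ ((j : ℝ) / c) := by
    intro j hj
    rw [hp j hj]
    have h1 : (c - (j:ℝ)) / c = 1 - (j:ℝ) / c := by field_simp
    rw [show ((2:ℝ) ^ b + 1 - (j:ℝ)) / (2 ^ b + 1) = (c - (j:ℝ)) / c from rfl, h1,
      Real.rpow_sub hm, Real.rpow_one, Real.div_rpow hM.le hm.le,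
      div_mul_eq_mul_div, mul_div_assoc]
  have pmono : ∀ j j' : ℕ, j ≤ j' → j' ≤ 2 ^ b → p j ≤ p j' := by
    intro j j' hjj hj'
    rw [key j (hjj.trans hj'), key j' hj']
    apply mul_le_mul_of_nonneg_left _ hm.le
    apply Real.rpow_le_rpow_of_exponent_le hMm1
    apply div_le_div_of_nonneg_right ?_ hc.le
    exact_mod_cast hjj
  have pm : ∀ j : ℕ, j ≤ 2 ^ b → m ≤ p j := by
    intro j hj
    rw [key j hj]
    nth_rewrite 1 [show m = m * (M/m)^(0:ℝ) by simp]
    apply mul_le_mul_of_nonneg_left _ hm.le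
    exact Real.rpow_le_rpow_of_exponent_le hMm1 (by positivity)
  have hi1' : i - 1 ≤ 2 ^ b := le_trans (Nat.sub_le _ _) hi2
  have hstep : p i = (M / m) ^ ((1:ℝ) / c) * p (i - 1) := by
    rw [key i hi2, key (i-1) hi1']
    rw [← mul_assoc, mul_comm ((M/m) ^ ((1:ℝ)/c)) m, mul_assoc,
      ← Real.rpow_add hMm]
    congr 1
    have : ((i - 1 : ℕ) : ℝ) = (i : ℝ) - 1 := by
      have := Nat.cast_sub hi1 (R := ℝ); simpa using this
    rw [this]; ring
  have hppos : 0 < p (i - 1) := by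
    rw [key _ hi1']; positivity
  have hin' : i ≤ n := le_trans hin (Nat.sub_le _ _)
  -- prefix identity
  have hpre : (List.ofFn σ).take i = List.ofFn (fun t : Fin i => p ((t:ℕ) + 1)) := by
    apply List.ext_getElem
    · simp [hin']
    · intro t h1 h2
      have ht : t < i := by simpa using h2
      have htn : t < n := lt_of_lt_of_le ht hin'
      simp only [List.getElem_take, List.getElem_ofFn]
      rw [hσ]
      simp [ht]
  -- first part
  have main : osProfit hn A σ ≤ p (i - 1) := by
    rw [osProfit]
    split_ifs with h
    · set S := Finset.univ.filter
        (fun k : Fin n => A ((List.ofFn σ).take ((k : ℕ) + 1)) = true) with hS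
      set k := S.min' (h.imp fun k hk => Finset.mem_filter.mpr ⟨Finset.mem_univ _, hk⟩) with hk
      have hkS : k ∈ S := Finset.min'_mem _ _
      have hkA : A ((List.ofFn σ).take ((k : ℕ) + 1)) = true :=
        (Finset.mem_filter.mp hkS).2
      have hkne : (k : ℕ) ≠ i - 1 := by
        intro hne
        rw [hne, show i - 1 + 1 = i from by omega, hpre, hA] at hkA
        exact Bool.false_ne_true hkA
      rw [hσ]
      split_ifs with hki
      · have : (k:ℕ) + 1 ≤ i - 1 := by omega
        exact pmono _ _ this hi1'
      · exact pm _ hi1'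
    · rw [hσ]
      have : ¬ (n - 1 < i) := by omega
      simp only [this, if_false]
      exact pm _ hi1'
  refine ⟨main, ?_⟩
  -- maxPrice ≥ p i
  have hi1n : i - 1 < n := by omega
  have hmax : p i ≤ maxPrice hn σ := by
    have := Finset.le_sup' σ (Finset.mem_univ (⟨i - 1, hi1n⟩ : Fin n))
    rw [hσ] at this
    simp only [show i - 1 < i from by omega, if_true] at this
    rw [show i - 1 + 1 = i from by omega] at this
    exact this
  calc (M / m) ^ ((1 : ℝ) / (2 ^ b + 1)) * osProfit hn A σ
      ≤ (M / m) ^ ((1 : ℝ) / c) * p (i - 1) := by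
        apply mul_le_mul_of_nonneg_left main (by positivity)
    _ = p i := hstep.symm
    _ ≤ maxPrice hn σ := hmax
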